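/- arXiv:2507.17556 — 3 statements merged into one kernel-verified Lean document; each statement's English description precedes it below -/
import Mathlib

section
/- Let L_g > 0 and suppose each gradient ∇f_i is L_g-Lipschitz continuous on ℝⁿ and that for each i ∈ N there exists x_i* ∈ ℝⁿ with ∇f_i(x_i*) = 0. Let x ∈ ℝⁿ and D_0 ≥ 0 satisfy max_{i ∈ N} ‖x − x_i*‖ ≤ D_0. Let ε_g > 0 and h ∈ [0,1] satisfy ‖∇f(x)‖ > ε_g and 10 L_g D_0 h < ε_g. Then for every nonempty G ⊆ N with |G| ≥ ⌈(1−h)·d⌉, one has ‖∇f_G(x)‖ > 4ε_g/5. -/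
open scoped RealInnerProductSpace

/-- The spectral (ℓ²-operator) norm of a real matrix. -/
noncomputable def specNorm {n : ℕ} (A : Matrix (Fin n) (Fin n) ℝ) : ℝ :=
  ‖Matrix.toEuclideanCLM (𝕜 := ℝ) A‖

/-- The smallest eigenvalue of a (Hermitian) real matrix. -/
noncomputable def lambdaMin {n : ℕ} (A : Matrix (Fin n) (Fin n) ℝ) : ℝ :=
  if h : A.IsHermitian then ⨅ i, h.eigenvalues i else 0

/-- The Hessian matrix of `f` at `x`, given by second directional derivatives. -/
noncomputable def hessian {n : ℕ} (f : EuclideanSpace ℝ (Fin n) → ℝ)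
    (x : EuclideanSpace ℝ (Fin n)) : Matrix (Fin n) (Fin n) ℝ :=
  fun i j => iteratedFDeriv ℝ 2 f x ![EuclideanSpace.single i 1, EuclideanSpace.single j 1]

/-!
Each `∇fᵢ(x)` has norm at most `B = L_g D₀`, since `∇fᵢ` vanishes at `xᵢ*` and is
`L_g`-Lipschitz. Dropping at most `h d` of the `d` gradients from their sum therefore changes
it by at most `h d B < d ε_g / 10`, so the sum over `G` still has norm above `9 d ε_g / 10`,
and dividing by `|G| ≤ d` gives an average of norm above `9 ε_g / 10`.
-/

open Finset

section Average

variable {ι E : Type*} [Fintype ι] [DecidableEq ι] [SeminormedAddCommGroup E]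

theorem norm_sum_sub_card_compl_mul_le (g : ι → E) {B : ℝ} (hB : ∀ i, ‖g i‖ ≤ B)
    (G : Finset ι) : ‖∑ i, g i‖ - #Gᶜ * B ≤ ‖∑ i ∈ G, g i‖ := by
  have hcompl : ‖∑ i ∈ Gᶜ, g i‖ ≤ #Gᶜ * B := by
    simpa using norm_sum_le_of_le Gᶜ fun i _ => hB i
  have hsplit : ∑ i, g i = ∑ i ∈ G, g i + ∑ i ∈ Gᶜ, g i := (sum_add_sum_compl G g).symm
  linarith [hsplit ▸ norm_add_le (∑ i ∈ G, g i) (∑ i ∈ Gᶜ, g i)]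

theorem lt_norm_average_of_card_compl_le [NormedSpace ℝ E] (g : ι → E) {B ε h : ℝ}
    (hB : ∀ i, ‖g i‖ ≤ B) (hε : 0 < ε) (hsum : ε < ‖(Fintype.card ι : ℝ)⁻¹ • ∑ i, g i‖)
    (hsmall : 10 * B * h < ε) (G : Finset ι) (hG : (1 - h) * Fintype.card ι ≤ #G) :
    9 * ε / 10 < ‖(#G : ℝ)⁻¹ • ∑ i ∈ G, g i‖ := by
  have hN : 0 < Fintype.card ι := by
    refine Nat.pos_of_ne_zero fun h0 => ?_
    simp [h0] at hsum
    linarith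
  have hB0 : 0 ≤ B :=
    have : Nonempty ι := Fintype.card_pos_iff.mp hN
    (norm_nonneg _).trans (hB (Classical.arbitrary ι))
  have hcard : (#Gᶜ : ℝ) + #G = Fintype.card ι := by exact_mod_cast card_compl_add_card G
  set N : ℝ := (Fintype.card ι : ℝ)
  replace hN : 0 < N := by positivity
  have hsum' : N * ε < ‖∑ i, g i‖ := by
    rwa [norm_smul, Real.norm_eq_abs, abs_inv, abs_of_pos hN, inv_mul_eq_div,
      lt_div_iff₀' hN] at hsum
  -- `#Gᶜ * B ≤ h N B < N ε / 10`
  have hdropped : #Gᶜ * B < N * ε / 10 := by nlinarith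
  have hsumG : 9 * ε / 10 * N < ‖∑ i ∈ G, g i‖ := by
    linarith [norm_sum_sub_card_compl_mul_le g hB G]
  have hGpos : (0 : ℝ) < #G := by
    have hne : ∑ i ∈ G, g i ≠ 0 := fun h0 => by
      rw [h0, norm_zero] at hsumG
      nlinarith
    exact_mod_cast card_pos.mpr (nonempty_of_sum_ne_zero hne)
  have hGN : (#G : ℝ) ≤ N := by linarith [(#Gᶜ).cast_nonneg (α := ℝ)]
  rw [norm_smul, Real.norm_eq_abs, abs_inv, abs_of_pos hGpos, inv_mul_eq_div, lt_div_iff₀ hGpos]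
  nlinarith

end Average

theorem norm_gradient_le_of_lipschitz {F : Type*} [NormedAddCommGroup F]
    [InnerProductSpace ℝ F] [CompleteSpace F] {f : F → ℝ} {L D : ℝ} {x xstar : F}
    (hL : 0 ≤ L) (hlip : ∀ y z, ‖gradient f y - gradient f z‖ ≤ L * ‖y - z‖)
    (hstar : gradient f xstar = 0) (hD : ‖x - xstar‖ ≤ D) :
    ‖gradient f x‖ ≤ L * D := by
  simpa [hstar] using (hlip x xstar).trans (mul_le_mul_of_nonneg_left hD hL)

theorem gradient_const_mul_sum {F ι : Type*} [NormedAddCommGroup F] [InnerProductSpace ℝ F]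
    [CompleteSpace F] (s : Finset ι) (f : ι → F → ℝ) {x : F}
    (hf : ∀ i, DifferentiableAt ℝ (f i) x) (c : ℝ) :
    gradient (fun y => c * ∑ i ∈ s, f i y) x = c • ∑ i ∈ s, gradient (f i) x := by
  refine HasGradientAt.gradient ?_
  rw [hasGradientAt_iff_hasFDerivAt, map_smul, map_sum]
  exact (HasFDerivAt.fun_sum fun i _ => (hf i).hasGradientAt.hasFDerivAt).const_mul c

theorem stmt_4_general {n d : ℕ}
    (f : Fin d → EuclideanSpace ℝ (Fin n) → ℝ)
    (hf : ∀ i, ContDiff ℝ 2 (f i))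
    (Lg : ℝ) (hLg : 0 < Lg)
    (hlip : ∀ i, ∀ y z : EuclideanSpace ℝ (Fin n),
      ‖gradient (f i) y - gradient (f i) z‖ ≤ Lg * ‖y - z‖)
    (xstar : Fin d → EuclideanSpace ℝ (Fin n))
    (hstar : ∀ i, gradient (f i) (xstar i) = 0)
    (x : EuclideanSpace ℝ (Fin n)) (D0 : ℝ)
    (hDx : ∀ i, ‖x - xstar i‖ ≤ D0)
    (εg h : ℝ) (hεg : 0 < εg)
    (hgrad : εg < ‖gradient (fun y => (d : ℝ)⁻¹ * ∑ i, f i y) x‖)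
    (hsmall : 10 * Lg * D0 * h < εg)
    (G : Finset (Fin d))
    (hcard : ⌈(1 - h) * (d : ℝ)⌉₊ ≤ G.card) :
    4 * εg / 5 < ‖gradient (fun y => ((G.card : ℝ))⁻¹ * ∑ i ∈ G, f i y) x‖ := by
  have hdiff i : DifferentiableAt ℝ (f i) x :=
    ((hf i).differentiable two_ne_zero).differentiableAt
  have hbound i : ‖gradient (f i) x‖ ≤ Lg * D0 :=
    norm_gradient_le_of_lipschitz hLg.le (hlip i) (hstar i) (hDx i)
  have hcard' : (1 - h) * Fintype.card (Fin d) ≤ #G := by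
    simpa using (Nat.le_ceil _).trans (Nat.cast_le.mpr hcard)
  rw [gradient_const_mul_sum _ _ hdiff] at hgrad ⊢
  have := lt_norm_average_of_card_compl_le _ hbound hεg (by simpa using hgrad)
    (by linarith) G hcard'
  linarith

theorem stmt_4 {n d : ℕ} (hn : 1 ≤ n) [NeZero d]
    (f : Fin d → EuclideanSpace ℝ (Fin n) → ℝ)
    (hf : ∀ i, ContDiff ℝ 2 (f i))
    (Lg : ℝ) (hLg : 0 < Lg)
    (hlip : ∀ i, ∀ y z : EuclideanSpace ℝ (Fin n),
      ‖gradient (f i) y - gradient (f i) z‖ ≤ Lg * ‖y - z‖)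
    (xstar : Fin d → EuclideanSpace ℝ (Fin n))
    (hstar : ∀ i, gradient (f i) (xstar i) = 0)
    (x : EuclideanSpace ℝ (Fin n)) (D0 : ℝ) (hD0 : 0 ≤ D0)
    (hDx : ∀ i, ‖x - xstar i‖ ≤ D0)
    (εg h : ℝ) (hεg : 0 < εg) (hh0 : 0 ≤ h) (hh1 : h ≤ 1)
    (hgrad : εg < ‖gradient (fun y => (d : ℝ)⁻¹ * ∑ i, f i y) x‖)
    (hsmall : 10 * Lg * D0 * h < εg)
    (G : Finset (Fin d)) (hG : G.Nonempty)
    (hcard : ⌈(1 - h) * (d : ℝ)⌉₊ ≤ G.card) :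
    4 * εg / 5 < ‖gradient (fun y => ((G.card : ℝ))⁻¹ * ∑ i ∈ G, f i y) x‖ :=
  stmt_4_general f hf Lg hLg hlip xstar hstar x D0 hDx εg h hεg hgrad hsmall G hcard
end

section
/- Let L_g > 0, x ∈ ℝⁿ, and suppose ‖∇²f_i(x)‖ ≤ L_g for every i ∈ N, where ‖·‖ is the spectral norm. Let ε_H > 0 and h ∈ [0,1] satisfy −λ_min(∇²f(x)) > ε_H and 10 L_g h < ε_H. Then for every nonempty H ⊆ N with |H| ≥ ⌈(1−h)·d⌉, one has −λ_min(∇²f_H(x)) > 4ε_H/5. -/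
open scoped RealInnerProductSpace

/-!
Take a unit eigenvector `v` for the smallest eigenvalue of `∇²f(x)`. The Rayleigh quotients
`qᵢ = ⟪v, ∇²fᵢ(x) v⟫` lie in `[-L_g, L_g]` and average below `-ε_H`. Dropping the at most `h d`
indices outside `H` changes their sum by at most `h d L_g < ε_H d / 10`, so their average over `H`
stays below `-9 ε_H / 10`; and `λ_min(∇²f_H(x)) ≤ ⟪v, ∇²f_H(x) v⟫`, which is exactly that average.
-/

open Finset

theorem Finset.sum_le_sum_add_card_sdiff_mul {ι : Type*} [DecidableEq ι] {s t : Finset ι}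
    (hst : s ⊆ t) {q : ι → ℝ} {L : ℝ} (hq : ∀ i ∈ t \ s, -L ≤ q i) :
    ∑ i ∈ s, q i ≤ ∑ i ∈ t, q i + #(t \ s) * L := by
  have hlow : #(t \ s) • (-L) ≤ ∑ i ∈ t \ s, q i := card_nsmul_le_sum _ _ _ hq
  rw [← sum_sdiff hst, nsmul_eq_mul] at *
  linarith

theorem Finset.inv_card_mul_sum_lt_of_card_ge {ι : Type*} {s t : Finset ι} (hst : s ⊆ t)
    {q : ι → ℝ} {L ε h : ℝ} (hL : 0 ≤ L) (hε : 0 < ε) (hq : ∀ i ∈ t, -L ≤ q i)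
    (havg : (#t : ℝ)⁻¹ * ∑ i ∈ t, q i < -ε) (hsmall : 10 * L * h < ε)
    (hs : (1 - h) * #t ≤ #s) :
    (#s : ℝ)⁻¹ * ∑ i ∈ s, q i < -(4 * ε / 5) := by
  classical
  have ht_pos : (0 : ℝ) < #t := by
    rcases t.eq_empty_or_nonempty with rfl | hne
    · simp only [card_empty, Nat.cast_zero, inv_zero, sum_empty, mul_zero, Left.neg_pos_iff] at havg
      linarith
    · exact_mod_cast hne.card_pos
  rw [inv_mul_lt_iff₀ ht_pos] at havg
  have hsub := sum_le_sum_add_card_sdiff_mul hst fun i hi => hq i (sdiff_subset hi)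
  have hcard : (#(t \ s) : ℝ) + #s = #t := by exact_mod_cast card_sdiff_add_card_eq_card hst
  have hcard_le : (#s : ℝ) ≤ #t := by exact_mod_cast card_le_card hst
  have hsum : ∑ i ∈ s, q i < -(9 * ε / 10) * #s := by
    nlinarith [mul_le_mul_of_nonneg_right (show (#(t \ s) : ℝ) ≤ h * #t by linarith) hL,
      mul_lt_mul_of_pos_right hsmall ht_pos]
  have hs_pos : (0 : ℝ) < #s := by
    rcases s.eq_empty_or_nonempty with rfl | hne
    · simp at hsum
    · exact_mod_cast hne.card_pos
  rw [inv_mul_lt_iff₀ hs_pos]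
  nlinarith

section Spectral

variable {n : ℕ} {A : Matrix (Fin n) (Fin n) ℝ}

lemma lambdaMin_le_eigenvalues (hA : A.IsHermitian) (j : Fin n) :
    lambdaMin A ≤ hA.eigenvalues j := by
  rw [lambdaMin, dif_pos hA]
  exact ciInf_le (Finite.bddBelow_range _) j

lemma Matrix.IsHermitian.toEuclideanCLM_eigenvectorBasis (hA : A.IsHermitian) (j : Fin n) :
    Matrix.toEuclideanCLM (𝕜 := ℝ) A (hA.eigenvectorBasis j)
      = hA.eigenvalues j • hA.eigenvectorBasis j := by
  apply (WithLp.equiv 2 (Fin n → ℝ)).injective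
  simpa using hA.mulVec_eigenvectorBasis j

lemma Matrix.IsHermitian.inner_toEuclideanCLM_self (hA : A.IsHermitian)
    (v : EuclideanSpace ℝ (Fin n)) :
    ⟪v, Matrix.toEuclideanCLM (𝕜 := ℝ) A v⟫
      = ∑ j, hA.eigenvalues j * ⟪hA.eigenvectorBasis j, v⟫ ^ 2 := by
  nth_rw 2 [← hA.eigenvectorBasis.sum_repr' v]
  simp only [map_sum, map_smul, hA.toEuclideanCLM_eigenvectorBasis, inner_sum, smul_smul,
    real_inner_smul_right]
  refine sum_congr rfl fun j _ => ?_
  rw [real_inner_comm v]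
  ring

lemma lambdaMin_le_inner (hA : A.IsHermitian) {v : EuclideanSpace ℝ (Fin n)} (hv : ‖v‖ = 1) :
    lambdaMin A ≤ ⟪v, Matrix.toEuclideanCLM (𝕜 := ℝ) A v⟫ := by
  have hsum : ∑ j, ⟪hA.eigenvectorBasis j, v⟫ ^ 2 = 1 := by
    rw [hA.eigenvectorBasis.sum_sq_inner_right, hv, one_pow]
  calc lambdaMin A = ∑ j, lambdaMin A * ⟪hA.eigenvectorBasis j, v⟫ ^ 2 := by
        rw [← mul_sum, hsum, mul_one]
    _ ≤ ∑ j, hA.eigenvalues j * ⟪hA.eigenvectorBasis j, v⟫ ^ 2 := by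
        gcongr with j; exact lambdaMin_le_eigenvalues hA j
    _ = ⟪v, Matrix.toEuclideanCLM (𝕜 := ℝ) A v⟫ := (hA.inner_toEuclideanCLM_self v).symm

lemma exists_norm_eq_one_inner_eq_lambdaMin [NeZero n] (hA : A.IsHermitian) :
    ∃ v : EuclideanSpace ℝ (Fin n), ‖v‖ = 1 ∧
      ⟪v, Matrix.toEuclideanCLM (𝕜 := ℝ) A v⟫ = lambdaMin A := by
  obtain ⟨j, -, hj⟩ := exists_min_image univ hA.eigenvalues univ_nonempty
  refine ⟨hA.eigenvectorBasis j, hA.eigenvectorBasis.orthonormal.1 j, ?_⟩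
  rw [hA.toEuclideanCLM_eigenvectorBasis, real_inner_smul_right, real_inner_self_eq_norm_sq,
    hA.eigenvectorBasis.orthonormal.1 j, one_pow, mul_one]
  rw [lambdaMin, dif_pos hA]
  exact le_antisymm (le_ciInf fun i => hj i (mem_univ i)) (ciInf_le (Finite.bddBelow_range _) j)

lemma abs_inner_toEuclideanCLM_le_specNorm (A : Matrix (Fin n) (Fin n) ℝ)
    {v : EuclideanSpace ℝ (Fin n)} (hv : ‖v‖ = 1) :
    |⟪v, Matrix.toEuclideanCLM (𝕜 := ℝ) A v⟫| ≤ specNorm A := by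
  simpa [specNorm, ContinuousLinearMap.rayleighQuotient, ContinuousLinearMap.reApplyInnerSelf_apply,
    hv, real_inner_comm] using (Matrix.toEuclideanCLM (𝕜 := ℝ) A).rayleighQuotient_le_norm v

end Spectral

lemma inner_toEuclideanCLM_smul_sum {n : ℕ} {ι : Type*} (s : Finset ι)
    (A : ι → Matrix (Fin n) (Fin n) ℝ) (c : ℝ) (v : EuclideanSpace ℝ (Fin n)) :
    ⟪v, Matrix.toEuclideanCLM (𝕜 := ℝ) (c • ∑ i ∈ s, A i) v⟫
      = c * ∑ i ∈ s, ⟪v, Matrix.toEuclideanCLM (𝕜 := ℝ) (A i) v⟫ := by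
  rw [map_smul, map_sum, smul_apply, real_inner_smul_right, _root_.sum_apply, inner_sum]

section Hessian

variable {n : ℕ}

lemma hessian_isHermitian {f : EuclideanSpace ℝ (Fin n) → ℝ} (hf : ContDiff ℝ 2 f)
    (x : EuclideanSpace ℝ (Fin n)) : (hessian f x).IsHermitian := by
  refine Matrix.IsHermitian.ext fun i j => ?_
  simp only [hessian, star_trivial, iteratedFDeriv_two_apply]
  simpa using hf.contDiffAt.isSymmSndFDerivAt (by simp) (EuclideanSpace.single j 1)
    (EuclideanSpace.single i 1)

lemma hessian_const_mul_sum {ι : Type*} (s : Finset ι) {f : ι → EuclideanSpace ℝ (Fin n) → ℝ}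
    (hf : ∀ i ∈ s, ContDiff ℝ 2 (f i)) (c : ℝ) (x : EuclideanSpace ℝ (Fin n)) :
    hessian (fun y => c * ∑ i ∈ s, f i y) x = c • ∑ i ∈ s, hessian (f i) x := by
  ext i j
  change iteratedFDeriv ℝ 2 (c • fun y => ∑ i ∈ s, f i y) x _ = _
  rw [iteratedFDeriv_const_smul_apply (ContDiff.sum hf).contDiffAt, iteratedFDeriv_sum hf]
  simp [hessian, Matrix.sum_apply]

end Hessian

theorem stmt_5_general {n d : ℕ} (hn : 1 ≤ n)
    (f : Fin d → EuclideanSpace ℝ (Fin n) → ℝ)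
    (hf : ∀ i, ContDiff ℝ 2 (f i))
    (Lg : ℝ) (hLg : 0 < Lg)
    (x : EuclideanSpace ℝ (Fin n))
    (hhess : ∀ i, specNorm (hessian (f i) x) ≤ Lg)
    (εH h : ℝ) (hεH : 0 < εH)
    (hcurv : εH < -lambdaMin (hessian (fun y => (d : ℝ)⁻¹ * ∑ i, f i y) x))
    (hsmall : 10 * Lg * h < εH)
    (H : Finset (Fin d))
    (hcard : ⌈(1 - h) * (d : ℝ)⌉₊ ≤ H.card) :
    4 * εH / 5 < -lambdaMin (hessian (fun y => ((H.card : ℝ))⁻¹ * ∑ i ∈ H, f i y) x) := by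
  have : NeZero n := ⟨by omega⟩
  have hF (s : Finset (Fin d)) (c : ℝ) : ContDiff ℝ 2 (fun y => c * ∑ i ∈ s, f i y) :=
    contDiff_const.mul (ContDiff.sum fun i _ => hf i)
  obtain ⟨v, hv, hvmin⟩ :=
    exists_norm_eq_one_inner_eq_lambdaMin (hessian_isHermitian (hF univ (d : ℝ)⁻¹) x)
  set q := fun i => ⟪v, Matrix.toEuclideanCLM (𝕜 := ℝ) (hessian (f i) x) v⟫
  have hQ (s : Finset (Fin d)) (c : ℝ) :
      ⟪v, Matrix.toEuclideanCLM (𝕜 := ℝ) (hessian (fun y => c * ∑ i ∈ s, f i y) x) v⟫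
        = c * ∑ i ∈ s, q i := by
    rw [hessian_const_mul_sum s (fun i _ => hf i), inner_toEuclideanCLM_smul_sum]
  have hq (i : Fin d) (_ : i ∈ univ) : -Lg ≤ q i :=
    neg_le_of_abs_le ((abs_inner_toEuclideanCLM_le_specNorm _ hv).trans (hhess i))
  have havg : ((#(univ : Finset (Fin d)) : ℕ) : ℝ)⁻¹ * ∑ i, q i < -εH := by
    rw [card_univ, Fintype.card_fin, ← hQ, hvmin]
    linarith
  have hsize : (1 - h) * ((#(univ : Finset (Fin d)) : ℕ) : ℝ) ≤ #H := by
    rw [card_univ, Fintype.card_fin]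
    exact (Nat.le_ceil _).trans (by exact_mod_cast hcard)
  have hH := inv_card_mul_sum_lt_of_card_ge (subset_univ H) hLg.le hεH hq havg hsmall hsize
  have hmin := lambdaMin_le_inner (hessian_isHermitian (hF H (#H : ℝ)⁻¹) x) hv
  rw [hQ] at hmin
  linarith

theorem stmt_5 {n d : ℕ} (hn : 1 ≤ n) [NeZero d]
    (f : Fin d → EuclideanSpace ℝ (Fin n) → ℝ)
    (hf : ∀ i, ContDiff ℝ 2 (f i))
    (Lg : ℝ) (hLg : 0 < Lg)
    (x : EuclideanSpace ℝ (Fin n))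
    (hhess : ∀ i, specNorm (hessian (f i) x) ≤ Lg)
    (εH h : ℝ) (hεH : 0 < εH) (hh0 : 0 ≤ h) (hh1 : h ≤ 1)
    (hcurv : εH < -lambdaMin (hessian (fun y => (d : ℝ)⁻¹ * ∑ i, f i y) x))
    (hsmall : 10 * Lg * h < εH)
    (H : Finset (Fin d)) (hH : H.Nonempty)
    (hcard : ⌈(1 - h) * (d : ℝ)⌉₊ ≤ H.card) :
    4 * εH / 5 < -lambdaMin (hessian (fun y => ((H.card : ℝ))⁻¹ * ∑ i ∈ H, f i y) x) :=
  stmt_5_general hn f hf Lg hLg x hhess εH h hεH hcurv hsmall H hcard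
end

section
/- (Worst-case iteration complexity of the second-order sub-sampled trust-region method.) Let f : ℝⁿ → ℝ be twice continuously differentiable with L_g-Lipschitz gradient and L_H-Lipschitz Hessian (L_g, L_H > 0), bounded below by f_low ∈ ℝ. Let α ∈ (0,1), ε_g, ε_H > 0, D_0 ≥ 0, 0 < Δ_0 ≤ Δ_max. Set Δ̄ := min{ 2(1−α)ε_g / (5 [1 + 2 D_0/Δ_max] L_g), 4(1−α)ε_H / (5 [L_H/6 + 2(D_0/Δ_max + 1)(L_g/Δ_max)] ) } and Δ_min := min{Δ_0, Δ̄/2}. Let (x_k), (d_k), (g_k) be sequences in ℝⁿ, (Δ_k) positive reals, (B_k) symmetric n×n matrices, and define T(ε_g, ε_H) := inf{k ∈ ℕ : ‖∇f(x_k)‖ ≤ ε_g and λ_min(∇²f(x_k)) ≥ −ε_H}. Assume for every k < T(ε_g, ε_H): (i) ‖g_k − ∇f(x_k)‖ ≤ 2 L_g D_0 (Δ_k/Δ_max)²; (ii) ‖B_k‖ ≤ L_g; (iii) either ‖g_k‖ > 4ε_g/5, or both −λ_min(B_k) > 4ε_H/5 and ‖B_k − ∇²f(x_k)‖ ≤ 2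 L_g (Δ_k/Δ_max); (iv) ‖d_k‖ ≤ Δ_k; (v) with m_k(v) := f(x_k) + ⟨g_k, v⟩ + ½⟨B_k v, v⟩, m_k(0) − m_k(d_k) ≥ max{ ½‖g_k‖ min{Δ_k, ‖g_k‖/L_g}, −λ_min(B_k) Δ_k² }; and (vi) setting ρ_k := (f(x_k) − f(x_k + d_k))/(m_k(0) − m_k(d_k)): if ρ_k ≥ α then x_{k+1} = x_k + d_k and Δ_{k+1} = min{2Δ_k, Δ_max}, otherwise x_{k+1} = x_k and Δ_{k+1} = Δ_k/2. Then T(ε_g, ε_H) is finite and T(ε_g, ε_H) ≤ (5/α)(f(x_0) − f_low) max{ ε_g^{−1} Δ_min^{−1}, ε_H^{−1} Δ_min^{−2} } + log₂(Δ_max/Δ_min) + 1. -/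
/-!
Before the first approximate second-order stationary point, an iteration with radius
`Δ_k ≥ Δmin` predicts a decrease of at least `(2/5) μ`, where `μ = min (εg Δmin) (εH Δmin²)`:
this is read off the Cauchy and eigen-decrease bound (v) in whichever branch of the test (iii)
holds. Conversely, Taylor's bounds for the Lipschitz gradient and Hessian bound the model error
`f (x_k + d_k) - m_k (d_k)` by `(1 - α)` times the predicted decrease once `Δ_k ≤ Δ̄`
(`radiusThreshold`), so such iterations are successful. Hence the radius is only halved while
it exceeds `Δ̄`, and stays in `[Δmin, Δmax]`. The potential `5/(αμ) f(x_k) + log₂ Δ_k + k` is then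
nonincreasing: a successful step lowers `f` by at least `α (2/5) μ` and at most doubles the
radius, an unsuccessful one keeps `x_k` and halves it. Comparing the potential at `0` and `k`
with `f ≥ f_low` and `Δmin ≤ Δ_k ≤ Δmax` bounds every `k` preceding a stationary point, which
therefore exists.
-/

open scoped RealInnerProductSpace

theorem image_le_of_hasDerivAt_le {u v u' v' : ℝ → ℝ} (hu : ∀ t, HasDerivAt u (u' t) t)
    (hv : ∀ t, HasDerivAt v (v' t) t) (h₀ : u 0 ≤ v 0) (h' : ∀ t, 0 ≤ t → u' t ≤ v' t)
    {t : ℝ} (ht : 0 ≤ t) : u t ≤ v t :=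
  image_le_of_deriv_right_le_deriv_boundary (fun s _ => (hu s).continuousAt.continuousWithinAt)
    (fun s _ => (hu s).hasDerivWithinAt) h₀ (fun s _ => (hv s).continuousAt.continuousWithinAt)
    (fun s _ => (hv s).hasDerivWithinAt) (fun s hs => h' s hs.1) ⟨ht, le_rfl⟩

section LineDerivative

variable {F G : Type*} [NormedAddCommGroup F] [NormedSpace ℝ F] [NormedAddCommGroup G]
  [NormedSpace ℝ G]

theorem hasDerivAt_comp_add_smul {f : F → G} (hf : Differentiable ℝ f) (x d : F) (t : ℝ) :
    HasDerivAt (fun t : ℝ => f (x + t • d)) (fderiv ℝ f (x + t • d) d) t := by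
  have hline : HasDerivAt (fun t : ℝ => x + t • d) d t := by
    simpa using ((hasDerivAt_id t).smul_const d).const_add x
  exact (hf _).hasFDerivAt.comp_hasDerivAt t hline

theorem image_add_le_of_lipschitz_fderiv {f : F → ℝ} {L : ℝ} (hf : Differentiable ℝ f)
    (hL : ∀ y z, ‖fderiv ℝ f y - fderiv ℝ f z‖ ≤ L * ‖y - z‖) (x d : F) :
    f (x + d) ≤ f x + fderiv ℝ f x d + L / 2 * ‖d‖ ^ 2 := by
  have hderiv_le : ∀ t, 0 ≤ t → fderiv ℝ f (x + t • d) d ≤ fderiv ℝ f x d + L * t * ‖d‖ ^ 2 := by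
    intro t ht
    calc fderiv ℝ f (x + t • d) d
        = fderiv ℝ f x d + (fderiv ℝ f (x + t • d) - fderiv ℝ f x) d := by simp
      _ ≤ fderiv ℝ f x d + ‖fderiv ℝ f (x + t • d) - fderiv ℝ f x‖ * ‖d‖ := by
        gcongr; exact (Real.le_norm_self _).trans (ContinuousLinearMap.le_opNorm _ _)
      _ ≤ fderiv ℝ f x d + L * ‖t • d‖ * ‖d‖ := by
        gcongr; simpa using hL (x + t • d) x
      _ = fderiv ℝ f x d + L * t * ‖d‖ ^ 2 := by
        rw [norm_smul, Real.norm_of_nonneg ht]; ring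
  have hmodel : ∀ t, HasDerivAt (fun t => f x + t * fderiv ℝ f x d + L / 2 * t ^ 2 * ‖d‖ ^ 2)
      (fderiv ℝ f x d + L * t * ‖d‖ ^ 2) t := by
    intro t
    refine ((((hasDerivAt_id t).mul_const _).const_add _).add
      (((hasDerivAt_pow 2 t).const_mul (L / 2)).mul_const _)).congr_deriv ?_
    push_cast; ring
  simpa using image_le_of_hasDerivAt_le (hasDerivAt_comp_add_smul hf x d) hmodel (by simp)
    hderiv_le zero_le_one

theorem image_add_le_of_lipschitz_fderiv_fderiv {f : F → ℝ} {L : ℝ} (hf : ContDiff ℝ 2 f)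
    (hL : ∀ y z, ‖fderiv ℝ (fderiv ℝ f) y - fderiv ℝ (fderiv ℝ f) z‖ ≤ L * ‖y - z‖) (x d : F) :
    f (x + d) ≤ f x + fderiv ℝ f x d + 1 / 2 * fderiv ℝ (fderiv ℝ f) x d d + L / 6 * ‖d‖ ^ 3 := by
  set D₂ := fderiv ℝ (fderiv ℝ f)
  have hf' : Differentiable ℝ (fderiv ℝ f) :=
    (hf.fderiv_right (m := 1) le_rfl).differentiable one_ne_zero
  have hslope : ∀ t, HasDerivAt (fun t : ℝ => fderiv ℝ f (x + t • d) d) (D₂ (x + t • d) d d) t :=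
    fun t => (ContinuousLinearMap.apply ℝ ℝ d).hasFDerivAt.comp_hasDerivAt t
      (hasDerivAt_comp_add_smul hf' x d t)
  have hcurv_le : ∀ t, 0 ≤ t → D₂ (x + t • d) d d ≤ D₂ x d d + L * t * ‖d‖ ^ 3 := by
    intro t ht
    calc D₂ (x + t • d) d d = D₂ x d d + (D₂ (x + t • d) - D₂ x) d d := by simp
      _ ≤ D₂ x d d + ‖D₂ (x + t • d) - D₂ x‖ * ‖d‖ * ‖d‖ := by
        gcongr; exact (Real.le_norm_self _).trans (ContinuousLinearMap.le_opNorm₂ _ _ _)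
      _ ≤ D₂ x d d + L * ‖t • d‖ * ‖d‖ * ‖d‖ := by
        gcongr; simpa using hL (x + t • d) x
      _ = D₂ x d d + L * t * ‖d‖ ^ 3 := by
        rw [norm_smul, Real.norm_of_nonneg ht]; ring
  have hslope_le : ∀ t, 0 ≤ t →
      fderiv ℝ f (x + t • d) d ≤ fderiv ℝ f x d + t * D₂ x d d + L / 2 * t ^ 2 * ‖d‖ ^ 3 := by
    have hslope_model : ∀ t,
        HasDerivAt (fun t => fderiv ℝ f x d + t * D₂ x d d + L / 2 * t ^ 2 * ‖d‖ ^ 3)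
          (D₂ x d d + L * t * ‖d‖ ^ 3) t := by
      intro t
      refine ((((hasDerivAt_id t).mul_const _).const_add _).add
        (((hasDerivAt_pow 2 t).const_mul (L / 2)).mul_const _)).congr_deriv ?_
      push_cast; ring
    exact fun t ht => image_le_of_hasDerivAt_le hslope hslope_model (by simp) hcurv_le ht
  have hmodel : ∀ t, HasDerivAt
      (fun t => f x + t * fderiv ℝ f x d + t ^ 2 / 2 * D₂ x d d + L / 6 * t ^ 3 * ‖d‖ ^ 3)
      (fderiv ℝ f x d + t * D₂ x d d + L / 2 * t ^ 2 * ‖d‖ ^ 3) t := by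
    intro t
    refine (((((hasDerivAt_id t).mul_const _).const_add _).add
      (((hasDerivAt_pow 2 t).div_const 2).mul_const _)).add
      (((hasDerivAt_pow 3 t).const_mul (L / 6)).mul_const _)).congr_deriv ?_
    push_cast; ring
  have := image_le_of_hasDerivAt_le (hasDerivAt_comp_add_smul (hf.differentiable two_ne_zero) x d)
    hmodel (by simp) hslope_le zero_le_one
  norm_num at this
  linarith

end LineDerivative

theorem norm_fderiv_sub_fderiv_eq {F : Type*} [NormedAddCommGroup F] [InnerProductSpace ℝ F]
    [CompleteSpace F] (f : F → ℝ) (y z : F) :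
    ‖fderiv ℝ f y - fderiv ℝ f z‖ = ‖gradient f y - gradient f z‖ := by
  simp only [gradient, ← map_sub, LinearIsometryEquiv.norm_map]

variable {n : ℕ}

theorem specNorm_nonneg (A : Matrix (Fin n) (Fin n) ℝ) : 0 ≤ specNorm A := norm_nonneg _

theorem specNorm_sub_comm (A B : Matrix (Fin n) (Fin n) ℝ) :
    specNorm (A - B) = specNorm (B - A) := by
  simp only [specNorm, map_sub, norm_sub_rev]

theorem abs_inner_toEuclideanCLM_le (A : Matrix (Fin n) (Fin n) ℝ)
    (v w : EuclideanSpace ℝ (Fin n)) :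
    |⟪Matrix.toEuclideanCLM (𝕜 := ℝ) A v, w⟫| ≤ specNorm A * ‖v‖ * ‖w‖ :=
  (abs_real_inner_le_norm _ _).trans (by gcongr; exact ContinuousLinearMap.le_opNorm _ _)

theorem inner_toEuclideanCLM_hessian (f : EuclideanSpace ℝ (Fin n) → ℝ)
    (y v w : EuclideanSpace ℝ (Fin n)) :
    ⟪Matrix.toEuclideanCLM (𝕜 := ℝ) (hessian f y) v, w⟫ = fderiv ℝ (fderiv ℝ f) y w v := by
  have hentry : ∀ i j, hessian f y i j = fderiv ℝ (fderiv ℝ f) y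
      (EuclideanSpace.single i 1) (EuclideanSpace.single j 1) := fun i j =>
    iteratedFDeriv_two_apply ..
  have hv := (EuclideanSpace.basisFun (Fin n) ℝ).sum_repr v
  have hw := (EuclideanSpace.basisFun (Fin n) ℝ).sum_repr w
  simp only [EuclideanSpace.basisFun_repr, EuclideanSpace.basisFun_apply] at hv hw
  conv_rhs => rw [← hv, ← hw]
  simp only [real_inner_comm, Matrix.inner_toEuclideanCLM, dotProduct, Matrix.mulVec, hentry,
    mul_comm, Finset.mul_sum, mul_left_comm, map_sum, map_smul, sum_apply, smul_apply, smul_eq_mul]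
  exact Finset.sum_comm

theorem norm_fderiv_fderiv_sub_le (f : EuclideanSpace ℝ (Fin n) → ℝ)
    (y z : EuclideanSpace ℝ (Fin n)) :
    ‖fderiv ℝ (fderiv ℝ f) y - fderiv ℝ (fderiv ℝ f) z‖ ≤ specNorm (hessian f y - hessian f z) := by
  refine ContinuousLinearMap.opNorm_le_bound₂ _ (specNorm_nonneg _) fun w v => ?_
  have := abs_inner_toEuclideanCLM_le (hessian f y - hessian f z) v w
  rw [map_sub, sub_apply, inner_sub_left, inner_toEuclideanCLM_hessian,
    inner_toEuclideanCLM_hessian] at this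
  rw [Real.norm_eq_abs, sub_apply, sub_apply]
  linarith

noncomputable def quadModel (f : EuclideanSpace ℝ (Fin n) → ℝ) (x g : EuclideanSpace ℝ (Fin n))
    (B : Matrix (Fin n) (Fin n) ℝ) (v : EuclideanSpace ℝ (Fin n)) : ℝ :=
  f x + ⟪g, v⟫ + (1 / 2) * ⟪(Matrix.toEuclideanCLM (𝕜 := ℝ) B) v, v⟫

theorem quadModel_zero (f : EuclideanSpace ℝ (Fin n) → ℝ) (x g : EuclideanSpace ℝ (Fin n))
    (B : Matrix (Fin n) (Fin n) ℝ) :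
    quadModel f x g B 0 = f x := by
  simp [quadModel]

theorem sub_quadModel_le_of_lipschitz_gradient {f : EuclideanSpace ℝ (Fin n) → ℝ} {L : ℝ}
    (hf : Differentiable ℝ f) (hlip : ∀ y z, ‖gradient f y - gradient f z‖ ≤ L * ‖y - z‖)
    (x g : EuclideanSpace ℝ (Fin n)) (B : Matrix (Fin n) (Fin n) ℝ)
    (d : EuclideanSpace ℝ (Fin n)) :
    f (x + d) - quadModel f x g B d ≤
      ‖g - gradient f x‖ * ‖d‖ + (L + specNorm B) / 2 * ‖d‖ ^ 2 := by
  have htaylor := image_add_le_of_lipschitz_fderiv hf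
    (fun y z => (norm_fderiv_sub_fderiv_eq f y z).trans_le (hlip y z)) x d
  rw [← inner_gradient_left] at htaylor
  have hgrad : ⟪gradient f x - g, d⟫ ≤ ‖g - gradient f x‖ * ‖d‖ :=
    norm_sub_rev (gradient f x) g ▸ real_inner_le_norm _ _
  have hcurv : -⟪Matrix.toEuclideanCLM (𝕜 := ℝ) B d, d⟫ ≤ specNorm B * ‖d‖ ^ 2 := by
    simpa [sq, mul_assoc] using (neg_le_abs _).trans (abs_inner_toEuclideanCLM_le B d d)
  rw [inner_sub_left] at hgrad
  unfold quadModel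
  linarith

theorem sub_quadModel_le_of_lipschitz_hessian {f : EuclideanSpace ℝ (Fin n) → ℝ} {L : ℝ}
    (hf : ContDiff ℝ 2 f) (hlip : ∀ y z, specNorm (hessian f y - hessian f z) ≤ L * ‖y - z‖)
    (x g : EuclideanSpace ℝ (Fin n)) (B : Matrix (Fin n) (Fin n) ℝ)
    (d : EuclideanSpace ℝ (Fin n)) :
    f (x + d) - quadModel f x g B d ≤ ‖g - gradient f x‖ * ‖d‖ +
      specNorm (B - hessian f x) / 2 * ‖d‖ ^ 2 + L / 6 * ‖d‖ ^ 3 := by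
  have htaylor := image_add_le_of_lipschitz_fderiv_fderiv hf
    (fun y z => (norm_fderiv_fderiv_sub_le f y z).trans (hlip y z)) x d
  rw [← inner_gradient_left, ← inner_toEuclideanCLM_hessian] at htaylor
  have hgrad : ⟪gradient f x - g, d⟫ ≤ ‖g - gradient f x‖ * ‖d‖ :=
    norm_sub_rev (gradient f x) g ▸ real_inner_le_norm _ _
  have hcurv : ⟪Matrix.toEuclideanCLM (𝕜 := ℝ) (hessian f x - B) d, d⟫ ≤
      specNorm (B - hessian f x) * ‖d‖ ^ 2 := by
    simpa [sq, mul_assoc, specNorm_sub_comm (hessian f x)] using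
      (le_abs_self _).trans (abs_inner_toEuclideanCLM_le (hessian f x - B) d d)
  rw [inner_sub_left] at hgrad
  rw [map_sub, sub_apply, inner_sub_left] at hcurv
  unfold quadModel
  linarith

noncomputable def predictedDecrease (f : EuclideanSpace ℝ (Fin n) → ℝ)
    (x g : EuclideanSpace ℝ (Fin n)) (B : Matrix (Fin n) (Fin n) ℝ)
    (d : EuclideanSpace ℝ (Fin n)) : ℝ :=
  quadModel f x g B 0 - quadModel f x g B d

theorem alpha_le_div_predictedDecrease {f : EuclideanSpace ℝ (Fin n) → ℝ}
    {x g d : EuclideanSpace ℝ (Fin n)} {B : Matrix (Fin n) (Fin n) ℝ} {α : ℝ}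
    (hpos : 0 < predictedDecrease f x g B d)
    (herr : f (x + d) - quadModel f x g B d ≤ (1 - α) * predictedDecrease f x g B d) :
    α ≤ (f x - f (x + d)) / predictedDecrease f x g B d := by
  rw [le_div_iff₀ hpos]
  unfold predictedDecrease at *
  linarith [quadModel_zero f x g B]

noncomputable def radiusThreshold (Lg LH α εg εH D0 Δmax : ℝ) : ℝ :=
  min (2 * (1 - α) * εg / (5 * (1 + 2 * (D0 / Δmax)) * Lg))
    (4 * (1 - α) * εH / (5 * (LH / 6 + 2 * (D0 / Δmax + 1) * (Lg / Δmax))))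

theorem radiusThreshold_denominators_pos {Lg LH D0 Δmax : ℝ} (hLg : 0 < Lg) (hLH : 0 ≤ LH)
    (hD0 : 0 ≤ D0) (hΔmax : 0 < Δmax) :
    0 < 5 * (1 + 2 * (D0 / Δmax)) * Lg ∧
      0 < 5 * (LH / 6 + 2 * (D0 / Δmax + 1) * (Lg / Δmax)) := by
  have := div_nonneg hD0 hΔmax.le
  exact ⟨by positivity, by positivity⟩

theorem le_radiusThreshold_iff {Lg LH α εg εH D0 Δmax Δ : ℝ} (hLg : 0 < Lg) (hLH : 0 ≤ LH)
    (hD0 : 0 ≤ D0) (hΔmax : 0 < Δmax) :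
    Δ ≤ radiusThreshold Lg LH α εg εH D0 Δmax ↔
      Δ * (5 * (1 + 2 * (D0 / Δmax)) * Lg) ≤ 2 * (1 - α) * εg ∧
      Δ * (5 * (LH / 6 + 2 * (D0 / Δmax + 1) * (Lg / Δmax))) ≤ 4 * (1 - α) * εH := by
  obtain ⟨h₁, h₂⟩ := radiusThreshold_denominators_pos hLg hLH hD0 hΔmax
  rw [radiusThreshold, le_min_iff, le_div_iff₀ h₁, le_div_iff₀ h₂]

theorem radiusThreshold_pos {Lg LH α εg εH D0 Δmax : ℝ} (hLg : 0 < Lg) (hLH : 0 ≤ LH)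
    (hD0 : 0 ≤ D0) (hα : α < 1) (hεg : 0 < εg) (hεH : 0 < εH) (hΔmax : 0 < Δmax) :
    0 < radiusThreshold Lg LH α εg εH D0 Δmax := by
  obtain ⟨h₁, h₂⟩ := radiusThreshold_denominators_pos hLg hLH hD0 hΔmax
  have : 0 < 1 - α := sub_pos.2 hα
  exact lt_min (by positivity) (by positivity)

/-- Assumptions (i)–(vi) at one iteration, with `x, d, g, B, Δ` for `x_k, d_k, g_k, B_k, Δ_k` and
`x', Δ'` for `x_{k+1}, Δ_{k+1}`. -/
structure TrustRegionStep (f : EuclideanSpace ℝ (Fin n) → ℝ) (Lg D0 Δmax εg εH α : ℝ)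
    (x d g : EuclideanSpace ℝ (Fin n)) (B : Matrix (Fin n) (Fin n) ℝ) (Δ : ℝ)
    (x' : EuclideanSpace ℝ (Fin n)) (Δ' : ℝ) : Prop where
  norm_sub_gradient_le : ‖g - gradient f x‖ ≤ 2 * Lg * D0 * (Δ / Δmax) ^ 2
  specNorm_le : specNorm B ≤ Lg
  descent_test : 4 * εg / 5 < ‖g‖ ∨
    (4 * εH / 5 < -lambdaMin B ∧ specNorm (B - hessian f x) ≤ 2 * Lg * (Δ / Δmax))
  norm_le : ‖d‖ ≤ Δ
  predictedDecrease_ge :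
    predictedDecrease f x g B d ≥ max (1 / 2 * ‖g‖ * min Δ (‖g‖ / Lg)) (-lambdaMin B * Δ ^ 2)
  of_successful : α ≤ (f x - f (x + d)) / predictedDecrease f x g B d →
    x' = x + d ∧ Δ' = min (2 * Δ) Δmax
  of_unsuccessful : (f x - f (x + d)) / predictedDecrease f x g B d < α →
    x' = x ∧ Δ' = Δ / 2

namespace TrustRegionStep

variable {f : EuclideanSpace ℝ (Fin n) → ℝ} {Lg LH D0 Δmax εg εH α : ℝ}
  {x d g x' : EuclideanSpace ℝ (Fin n)} {B : Matrix (Fin n) (Fin n) ℝ} {Δ Δ' : ℝ}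

theorem le_predictedDecrease (h : TrustRegionStep f Lg D0 Δmax εg εH α x d g B Δ x' Δ') {Δmin : ℝ}
    (hLg : 0 < Lg) (hεH : 0 ≤ εH) (hΔmin : 0 ≤ Δmin) (hΔ : Δmin ≤ Δ)
    (hΔmin_g : 5 * Lg * Δmin ≤ 4 * εg) :
    2 / 5 * min (εg * Δmin) (εH * Δmin ^ 2) ≤ predictedDecrease f x g B d := by
  have hdec := h.predictedDecrease_ge
  rcases h.descent_test with hg | ⟨hneg, -⟩
  · have hmin : Δmin ≤ min Δ (‖g‖ / Lg) :=
      le_min hΔ ((le_div_iff₀ hLg).2 (by linarith))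
    have := mul_le_mul hg.le hmin hΔmin (norm_nonneg g)
    linarith [min_le_left (εg * Δmin) (εH * Δmin ^ 2), (le_max_left _ _).trans hdec]
  · have := mul_le_mul hneg.le (pow_le_pow_left₀ hΔmin hΔ 2) (sq_nonneg _) (by linarith)
    nlinarith [min_le_right (εg * Δmin) (εH * Δmin ^ 2), (le_max_right _ _).trans hdec,
      sq_nonneg Δmin]

theorem alpha_le_ratio_of_gradient_test
    (h : TrustRegionStep f Lg D0 Δmax εg εH α x d g B Δ x' Δ') (hf : Differentiable ℝ f)
    (hlip : ∀ y z, ‖gradient f y - gradient f z‖ ≤ Lg * ‖y - z‖) (hLg : 0 < Lg) (hD0 : 0 ≤ D0)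
    (hα₀ : 0 ≤ α) (hα₁ : α < 1) (hΔ : 0 < Δ) (hΔmax : Δ ≤ Δmax) (hg : 4 * εg / 5 < ‖g‖)
    (hradius : Δ * (5 * (1 + 2 * (D0 / Δmax)) * Lg) ≤ 2 * (1 - α) * εg) :
    α ≤ (f x - f (x + d)) / predictedDecrease f x g B d := by
  set p := predictedDecrease f x g B d
  set w := Δ / Δmax with hw_def
  have hw₀ : 0 ≤ w := div_nonneg hΔ.le (hΔ.le.trans hΔmax)
  have hw₁ : w ≤ 1 := div_le_one_of_le₀ hΔmax (hΔ.le.trans hΔmax)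
  have hexpand : Δ * (5 * (1 + 2 * (D0 / Δmax)) * Lg) = 5 * Lg * Δ + 10 * Lg * D0 * w := by
    rw [hw_def]; ring
  have hΔ_εg : 5 * Lg * Δ ≤ 2 * (1 - α) * εg := by
    linarith [mul_nonneg (mul_nonneg hLg.le hD0) hw₀]
  have hεg : 0 < εg := by nlinarith [mul_pos hLg hΔ]
  have hΔg : Δ ≤ ‖g‖ / Lg := by
    rw [le_div_iff₀ hLg]
    nlinarith
  have hp : 2 * εg / 5 * Δ ≤ p := by
    have := (le_max_left _ _).trans h.predictedDecrease_ge
    rw [min_eq_left hΔg] at this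
    nlinarith
  have herr := sub_quadModel_le_of_lipschitz_gradient hf hlip x g B d
  have hgrad : ‖g - gradient f x‖ * ‖d‖ ≤ 2 * Lg * D0 * w * Δ := by
    calc ‖g - gradient f x‖ * ‖d‖ ≤ 2 * Lg * D0 * w ^ 2 * Δ :=
          mul_le_mul h.norm_sub_gradient_le h.norm_le (norm_nonneg d) (by positivity)
      _ ≤ 2 * Lg * D0 * w * Δ := by gcongr; nlinarith
  have hcurv : (Lg + specNorm B) / 2 * ‖d‖ ^ 2 ≤ Lg * Δ ^ 2 := by
    have := pow_le_pow_left₀ (norm_nonneg d) h.norm_le 2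
    nlinarith [h.specNorm_le, specNorm_nonneg B]
  refine alpha_le_div_predictedDecrease (lt_of_lt_of_le (by positivity) hp) ?_
  -- `5 (f (x + d) - m d) ≤ Δ · (lhs of hradius) ≤ 2 (1 - α) εg Δ ≤ 5 (1 - α) p`
  linarith [mul_le_mul_of_nonneg_left hradius hΔ.le, congrArg (Δ * ·) hexpand,
    mul_le_mul_of_nonneg_left hp (sub_nonneg.2 hα₁.le)]

theorem alpha_le_ratio_of_curvature_test
    (h : TrustRegionStep f Lg D0 Δmax εg εH α x d g B Δ x' Δ') (hf : ContDiff ℝ 2 f)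
    (hlip : ∀ y z, specNorm (hessian f y - hessian f z) ≤ LH * ‖y - z‖) (hLg : 0 < Lg)
    (hLH : 0 ≤ LH) (hD0 : 0 ≤ D0) (hα₁ : α < 1) (hεH : 0 < εH) (hΔ : 0 < Δ) (hΔmax : Δ ≤ Δmax)
    (hneg : 4 * εH / 5 < -lambdaMin B)
    (hhess : specNorm (B - hessian f x) ≤ 2 * Lg * (Δ / Δmax))
    (hradius : Δ * (5 * (LH / 6 + 2 * (D0 / Δmax + 1) * (Lg / Δmax))) ≤ 4 * (1 - α) * εH) :
    α ≤ (f x - f (x + d)) / predictedDecrease f x g B d := by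
  set p := predictedDecrease f x g B d
  set w := Δ / Δmax with hw_def
  have hw₀ : 0 ≤ w := div_nonneg hΔ.le (hΔ.le.trans hΔmax)
  have hexpand : Δ ^ 2 * (Δ * (5 * (LH / 6 + 2 * (D0 / Δmax + 1) * (Lg / Δmax)))) =
      5 * LH / 6 * Δ ^ 3 + 10 * Lg * D0 * w ^ 2 * Δ + 10 * Lg * w * Δ ^ 2 := by
    rw [hw_def]; ring
  have hp : 4 * εH / 5 * Δ ^ 2 ≤ p := by
    have := (le_max_right _ _).trans h.predictedDecrease_ge
    nlinarith
  have herr := sub_quadModel_le_of_lipschitz_hessian hf hlip x g B d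
  have hgrad : ‖g - gradient f x‖ * ‖d‖ ≤ 2 * Lg * D0 * w ^ 2 * Δ :=
    mul_le_mul h.norm_sub_gradient_le h.norm_le (norm_nonneg d) (by positivity)
  have hcurv : specNorm (B - hessian f x) / 2 * ‖d‖ ^ 2 ≤ Lg * w * Δ ^ 2 := by
    have := pow_le_pow_left₀ (norm_nonneg d) h.norm_le 2
    nlinarith [specNorm_nonneg (B - hessian f x)]
  have hcubic : LH / 6 * ‖d‖ ^ 3 ≤ LH / 6 * Δ ^ 3 := by
    gcongr; exact h.norm_le
  refine alpha_le_div_predictedDecrease (lt_of_lt_of_le (by positivity) hp) ?_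
  have hslack : 0 ≤ Lg * w * Δ ^ 2 := by positivity
  -- `5 (f (x + d) - m d) ≤ Δ² · (lhs of hradius) ≤ 4 (1 - α) εH Δ² ≤ 5 (1 - α) p`
  linarith [mul_le_mul_of_nonneg_left hradius (sq_nonneg Δ),
    mul_le_mul_of_nonneg_left hp (sub_nonneg.2 hα₁.le)]

theorem alpha_le_ratio_of_le_radiusThreshold
    (h : TrustRegionStep f Lg D0 Δmax εg εH α x d g B Δ x' Δ') (hf : ContDiff ℝ 2 f)
    (hlipg : ∀ y z, ‖gradient f y - gradient f z‖ ≤ Lg * ‖y - z‖)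
    (hlipH : ∀ y z, specNorm (hessian f y - hessian f z) ≤ LH * ‖y - z‖) (hLg : 0 < Lg)
    (hLH : 0 ≤ LH) (hD0 : 0 ≤ D0) (hα₀ : 0 ≤ α) (hα₁ : α < 1) (hεH : 0 < εH) (hΔ : 0 < Δ)
    (hΔmax : Δ ≤ Δmax) (hthreshold : Δ ≤ radiusThreshold Lg LH α εg εH D0 Δmax) :
    α ≤ (f x - f (x + d)) / predictedDecrease f x g B d := by
  obtain ⟨hradius_g, hradius_H⟩ :=
    (le_radiusThreshold_iff hLg hLH hD0 (hΔ.trans_le hΔmax)).1 hthreshold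
  rcases h.descent_test with hg | ⟨hneg, hhess⟩
  · exact h.alpha_le_ratio_of_gradient_test (hf.differentiable two_ne_zero) hlipg hLg hD0 hα₀
      hα₁ hΔ hΔmax hg hradius_g
  · exact h.alpha_le_ratio_of_curvature_test hf hlipH hLg hLH hD0 hα₁ hεH hΔ hΔmax hneg hhess
      hradius_H

theorem radius_succ_mem_Icc (h : TrustRegionStep f Lg D0 Δmax εg εH α x d g B Δ x' Δ')
    (hf : ContDiff ℝ 2 f) (hlipg : ∀ y z, ‖gradient f y - gradient f z‖ ≤ Lg * ‖y - z‖)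
    (hlipH : ∀ y z, specNorm (hessian f y - hessian f z) ≤ LH * ‖y - z‖) (hLg : 0 < Lg)
    (hLH : 0 ≤ LH) (hD0 : 0 ≤ D0) (hα₀ : 0 ≤ α) (hα₁ : α < 1) (hεH : 0 < εH) {Δmin : ℝ}
    (hΔmin : 0 < Δmin) (hΔmin_threshold : 2 * Δmin ≤ radiusThreshold Lg LH α εg εH D0 Δmax)
    (hΔ : Δ ∈ Set.Icc Δmin Δmax) : Δ' ∈ Set.Icc Δmin Δmax := by
  by_cases hs : α ≤ (f x - f (x + d)) / predictedDecrease f x g B d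
  · obtain ⟨-, rfl⟩ := h.of_successful hs
    exact ⟨le_min (by linarith [hΔ.1]) (hΔ.1.trans hΔ.2), min_le_right _ _⟩
  · obtain ⟨-, rfl⟩ := h.of_unsuccessful (not_le.1 hs)
    have : radiusThreshold Lg LH α εg εH D0 Δmax < Δ := lt_of_not_ge fun hle =>
      hs (h.alpha_le_ratio_of_le_radiusThreshold hf hlipg hlipH hLg hLH hD0 hα₀ hα₁ hεH
        (hΔmin.trans_le hΔ.1) hΔ.2 hle)
    constructor <;> linarith [hΔ.2]

theorem potential_le (h : TrustRegionStep f Lg D0 Δmax εg εH α x d g B Δ x' Δ') {μ : ℝ}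
    (hα : 0 < α) (hμ : 0 < μ) (hdecrease : 2 / 5 * μ ≤ predictedDecrease f x g B d)
    (hΔ : 0 < Δ) (hΔ' : 0 < Δ') :
    5 / (α * μ) * f x' + Real.logb 2 Δ' + 1 ≤ 5 / (α * μ) * f x + Real.logb 2 Δ := by
  by_cases hs : α ≤ (f x - f (x + d)) / predictedDecrease f x g B d
  · obtain ⟨rfl, rfl⟩ := h.of_successful hs
    have hf_dec : α * (2 / 5 * μ) ≤ f x - f (x + d) :=
      (mul_le_mul_of_nonneg_left hdecrease hα.le).trans ((le_div_iff₀ (by linarith)).1 hs)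
    have hlog : Real.logb 2 (min (2 * Δ) Δmax) ≤ Real.logb 2 Δ + 1 :=
      calc Real.logb 2 (min (2 * Δ) Δmax) ≤ Real.logb 2 (2 * Δ) :=
            Real.logb_le_logb_of_le one_lt_two hΔ' (min_le_left _ _)
        _ = Real.logb 2 Δ + 1 := by
            rw [Real.logb_mul two_ne_zero hΔ.ne', Real.logb_self_eq_one one_lt_two, add_comm]
    have hscale : 5 / (α * μ) * (α * (2 / 5 * μ)) = 2 := by field_simp
    linarith [mul_le_mul_of_nonneg_left hf_dec (by positivity : 0 ≤ 5 / (α * μ))]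
  · obtain ⟨rfl, rfl⟩ := h.of_unsuccessful (not_le.1 hs)
    rw [Real.logb_div hΔ.ne' two_ne_zero, Real.logb_self_eq_one one_lt_two]
    linarith

end TrustRegionStep

theorem inv_min_le_max_inv (a b : ℝ) : (min a b)⁻¹ ≤ max a⁻¹ b⁻¹ := by
  rcases min_choice a b with h | h <;> rw [h]
  exacts [le_max_left _ _, le_max_right _ _]

section Run

variable {f : EuclideanSpace ℝ (Fin n) → ℝ} {Lg LH D0 Δmax εg εH α Δmin : ℝ}
  {x d g : ℕ → EuclideanSpace ℝ (Fin n)} {B : ℕ → Matrix (Fin n) (Fin n) ℝ} {Δ : ℕ → ℝ} {K : ℕ}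

theorem radius_mem_Icc_of_steps
    (hsteps : ∀ k < K, TrustRegionStep f Lg D0 Δmax εg εH α (x k) (d k) (g k) (B k) (Δ k)
      (x (k + 1)) (Δ (k + 1)))
    (hf : ContDiff ℝ 2 f) (hlipg : ∀ y z, ‖gradient f y - gradient f z‖ ≤ Lg * ‖y - z‖)
    (hlipH : ∀ y z, specNorm (hessian f y - hessian f z) ≤ LH * ‖y - z‖) (hLg : 0 < Lg)
    (hLH : 0 ≤ LH) (hD0 : 0 ≤ D0) (hα₀ : 0 ≤ α) (hα₁ : α < 1) (hεH : 0 < εH)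
    (hΔmin : 0 < Δmin) (hΔmin_threshold : 2 * Δmin ≤ radiusThreshold Lg LH α εg εH D0 Δmax)
    (hΔ₀ : Δ 0 ∈ Set.Icc Δmin Δmax) : ∀ k ≤ K, Δ k ∈ Set.Icc Δmin Δmax := by
  intro k hk
  induction k with
  | zero => exact hΔ₀
  | succ k ih =>
    exact (hsteps k hk).radius_succ_mem_Icc hf hlipg hlipH hLg hLH hD0 hα₀ hα₁ hεH hΔmin
      hΔmin_threshold (ih (by omega))

theorem natCast_le_of_steps
    (hsteps : ∀ k < K, TrustRegionStep f Lg D0 Δmax εg εH α (x k) (d k) (g k) (B k) (Δ k)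
      (x (k + 1)) (Δ (k + 1)))
    (hf : ContDiff ℝ 2 f) (hlipg : ∀ y z, ‖gradient f y - gradient f z‖ ≤ Lg * ‖y - z‖)
    (hlipH : ∀ y z, specNorm (hessian f y - hessian f z) ≤ LH * ‖y - z‖) {flow : ℝ}
    (hlow : ∀ y, flow ≤ f y) (hLg : 0 < Lg) (hLH : 0 ≤ LH) (hD0 : 0 ≤ D0) (hα : 0 < α)
    (hα₁ : α < 1) (hεg : 0 < εg) (hεH : 0 < εH) (hΔmin : 0 < Δmin)
    (hΔmin_threshold : 2 * Δmin ≤ radiusThreshold Lg LH α εg εH D0 Δmax)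
    (hΔ₀ : Δ 0 ∈ Set.Icc Δmin Δmax) :
    (K : ℝ) ≤ 5 / α * (f (x 0) - flow) * max (εg⁻¹ * Δmin⁻¹) (εH⁻¹ * (Δmin ^ 2)⁻¹) +
      Real.logb 2 (Δmax / Δmin) := by
  set μ := min (εg * Δmin) (εH * Δmin ^ 2)
  have hμ : 0 < μ := by positivity
  have hradius := radius_mem_Icc_of_steps hsteps hf hlipg hlipH hLg hLH hD0 hα.le hα₁ hεH
    hΔmin hΔmin_threshold hΔ₀
  have hΔmax : 0 < Δmax := hΔmin.trans_le (hΔ₀.1.trans hΔ₀.2)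
  have hΔmin_g : 5 * Lg * Δmin ≤ 4 * εg := by
    obtain ⟨h₁, -⟩ := (le_radiusThreshold_iff hLg hLH hD0 hΔmax).1 hΔmin_threshold
    nlinarith [div_nonneg hD0 hΔmax.le]
  have hpotential : ∀ k ≤ K, 5 / (α * μ) * f (x k) + Real.logb 2 (Δ k) + k ≤
      5 / (α * μ) * f (x 0) + Real.logb 2 (Δ 0) := by
    intro k hk
    induction k with
    | zero => simp
    | succ k ih =>
      have hΔk := hradius k (by omega)
      have := (hsteps k hk).potential_le hα hμ
        ((hsteps k hk).le_predictedDecrease hLg hεH.le hΔmin.le hΔk.1 hΔmin_g)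
        (hΔmin.trans_le hΔk.1) (hΔmin.trans_le (hradius (k + 1) hk).1)
      push_cast
      linarith [ih (by omega)]
  have hlog : Real.logb 2 (Δ 0) - Real.logb 2 (Δ K) ≤ Real.logb 2 (Δmax / Δmin) := by
    have hΔK := hradius K le_rfl
    rw [← Real.logb_div (hΔmin.trans_le hΔ₀.1).ne' (hΔmin.trans_le hΔK.1).ne']
    exact Real.logb_le_logb_of_le one_lt_two
      (div_pos (hΔmin.trans_le hΔ₀.1) (hΔmin.trans_le hΔK.1))
      (div_le_div₀ hΔmax.le hΔ₀.2 hΔmin hΔK.1)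
  have hμ_inv : μ⁻¹ ≤ max (εg⁻¹ * Δmin⁻¹) (εH⁻¹ * (Δmin ^ 2)⁻¹) := by
    rw [← mul_inv, ← mul_inv]; exact inv_min_le_max_inv _ _
  have hgap : 0 ≤ f (x 0) - flow := sub_nonneg.2 (hlow _)
  calc (K : ℝ)
      ≤ 5 / (α * μ) * (f (x 0) - f (x K)) + (Real.logb 2 (Δ 0) - Real.logb 2 (Δ K)) := by
        linarith [hpotential K le_rfl]
    _ ≤ 5 / (α * μ) * (f (x 0) - flow) + Real.logb 2 (Δmax / Δmin) := by
        gcongr; exact hlow _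
    _ = 5 / α * (f (x 0) - flow) * μ⁻¹ + Real.logb 2 (Δmax / Δmin) := by ring
    _ ≤ _ := by gcongr

end Run

theorem stmt_17_general {n : ℕ} (f : EuclideanSpace ℝ (Fin n) → ℝ)
    (Lg LH flow : ℝ) (hLg : 0 < Lg) (hLH : 0 < LH)
    (hf : ContDiff ℝ 2 f)
    (hlipg : ∀ y z : EuclideanSpace ℝ (Fin n),
      ‖gradient f y - gradient f z‖ ≤ Lg * ‖y - z‖)
    (hlipH : ∀ y z : EuclideanSpace ℝ (Fin n),
      specNorm (hessian f y - hessian f z) ≤ LH * ‖y - z‖)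
    (hlow : ∀ y, flow ≤ f y)
    (α εg εH D0 Δmax : ℝ) (hα0 : 0 < α) (hα1 : α < 1)
    (hεg : 0 < εg) (hεH : 0 < εH) (hD0 : 0 ≤ D0)
    (Δbar Δmin : ℝ)
    (hΔbar : Δbar = min (2 * (1 - α) * εg / (5 * (1 + 2 * (D0 / Δmax)) * Lg))
      (4 * (1 - α) * εH / (5 * (LH / 6 + 2 * (D0 / Δmax + 1) * (Lg / Δmax)))))
    (x d g : ℕ → EuclideanSpace ℝ (Fin n)) (Δ : ℕ → ℝ)
    (B : ℕ → Matrix (Fin n) (Fin n) ℝ)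
    (hΔ0pos : 0 < Δ 0) (hΔ0max : Δ 0 ≤ Δmax)
    (hΔmin : Δmin = min (Δ 0) (Δbar / 2))
    (m : ℕ → EuclideanSpace ℝ (Fin n) → ℝ)
    (hm : ∀ k v, m k v = f (x k) + ⟪g k, v⟫
      + (1 / 2) * ⟪(Matrix.toEuclideanCLM (𝕜 := ℝ) (B k)) v, v⟫)
    (hyp : ∀ k, (∀ j ≤ k,
        ¬(‖gradient f (x j)‖ ≤ εg ∧ -εH ≤ lambdaMin (hessian f (x j)))) →
      (‖g k - gradient f (x k)‖ ≤ 2 * Lg * D0 * (Δ k / Δmax) ^ 2) ∧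
      (specNorm (B k) ≤ Lg) ∧
      (4 * εg / 5 < ‖g k‖ ∨
        (4 * εH / 5 < -lambdaMin (B k) ∧
          specNorm (B k - hessian f (x k)) ≤ 2 * Lg * (Δ k / Δmax))) ∧
      (‖d k‖ ≤ Δ k) ∧
      (m k 0 - m k (d k)
        ≥ max (1 / 2 * ‖g k‖ * min (Δ k) (‖g k‖ / Lg)) (-lambdaMin (B k) * Δ k ^ 2)) ∧
      ((α ≤ (f (x k) - f (x k + d k)) / (m k 0 - m k (d k)) →
          x (k + 1) = x k + d k ∧ Δ (k + 1) = min (2 * Δ k) Δmax) ∧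
        ((f (x k) - f (x k + d k)) / (m k 0 - m k (d k)) < α →
          x (k + 1) = x k ∧ Δ (k + 1) = Δ k / 2))) :
    {k : ℕ | ‖gradient f (x k)‖ ≤ εg ∧ -εH ≤ lambdaMin (hessian f (x k))}.Nonempty ∧
    ((sInf {k : ℕ | ‖gradient f (x k)‖ ≤ εg ∧
        -εH ≤ lambdaMin (hessian f (x k))} : ℕ) : ℝ) ≤
      (5 / α) * (f (x 0) - flow) * max (εg⁻¹ * Δmin⁻¹) (εH⁻¹ * (Δmin ^ 2)⁻¹) +
      Real.logb 2 (Δmax / Δmin) + 1 := by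
  obtain rfl : m = fun k => quadModel f (x k) (g k) (B k) := funext fun k => funext (hm k)
  set S := {k : ℕ | ‖gradient f (x k)‖ ≤ εg ∧ -εH ≤ lambdaMin (hessian f (x k))}
  set bound := 5 / α * (f (x 0) - flow) * max (εg⁻¹ * Δmin⁻¹) (εH⁻¹ * (Δmin ^ 2)⁻¹) +
    Real.logb 2 (Δmax / Δmin)
  obtain rfl : Δbar = radiusThreshold Lg LH α εg εH D0 Δmax := hΔbar
  have hΔmax : 0 < Δmax := hΔ0pos.trans_le hΔ0max
  have hΔmin_pos : 0 < Δmin := by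
    rw [hΔmin]
    exact lt_min hΔ0pos (half_pos (radiusThreshold_pos hLg hLH.le hD0 hα1 hεg hεH hΔmax))
  obtain ⟨hΔmin_le, hΔmin_threshold⟩ := le_min_iff.1 hΔmin.le
  have hle_bound : ∀ K : ℕ, (∀ j < K, j ∉ S) → (K : ℝ) ≤ bound := by
    intro K hK
    have hsteps : ∀ k < K, TrustRegionStep f Lg D0 Δmax εg εH α (x k) (d k) (g k) (B k) (Δ k)
        (x (k + 1)) (Δ (k + 1)) := by
      intro k hk
      obtain ⟨h₁, h₂, h₃, h₄, h₅, h₆, h₇⟩ := hyp k fun j hj => hK j (by omega)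
      exact ⟨h₁, h₂, h₃, h₄, h₅, h₆, h₇⟩
    exact natCast_le_of_steps hsteps hf hlipg hlipH hlow hLg hLH.le hD0 hα0 hα1 hεg hεH
      hΔmin_pos (by linarith) ⟨hΔmin_le, hΔ0max⟩
  have hS : S.Nonempty := by
    by_contra hS
    have := hle_bound (⌈bound⌉₊ + 1) fun j _ hj => hS ⟨j, hj⟩
    push_cast at this
    linarith [Nat.le_ceil bound]
  refine ⟨hS, ?_⟩
  linarith [hle_bound (sInf S) fun j hj => Nat.notMem_of_lt_sInf hj]

theorem stmt_17 {n : ℕ} (f : EuclideanSpace ℝ (Fin n) → ℝ)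
    (Lg LH flow : ℝ) (hLg : 0 < Lg) (hLH : 0 < LH)
    (hf : ContDiff ℝ 2 f)
    (hlipg : ∀ y z : EuclideanSpace ℝ (Fin n),
      ‖gradient f y - gradient f z‖ ≤ Lg * ‖y - z‖)
    (hlipH : ∀ y z : EuclideanSpace ℝ (Fin n),
      specNorm (hessian f y - hessian f z) ≤ LH * ‖y - z‖)
    (hlow : ∀ y, flow ≤ f y)
    (α εg εH D0 Δmax : ℝ) (hα0 : 0 < α) (hα1 : α < 1)
    (hεg : 0 < εg) (hεH : 0 < εH) (hD0 : 0 ≤ D0)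
    (Δbar Δmin : ℝ)
    (hΔbar : Δbar = min (2 * (1 - α) * εg / (5 * (1 + 2 * (D0 / Δmax)) * Lg))
      (4 * (1 - α) * εH / (5 * (LH / 6 + 2 * (D0 / Δmax + 1) * (Lg / Δmax)))))
    (x d g : ℕ → EuclideanSpace ℝ (Fin n)) (Δ : ℕ → ℝ)
    (B : ℕ → Matrix (Fin n) (Fin n) ℝ) (hBsymm : ∀ k, (B k).IsHermitian)
    (hΔpos : ∀ k, 0 < Δ k) (hΔ0pos : 0 < Δ 0) (hΔ0max : Δ 0 ≤ Δmax)
    (hΔmin : Δmin = min (Δ 0) (Δbar / 2))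
    (m : ℕ → EuclideanSpace ℝ (Fin n) → ℝ)
    (hm : ∀ k v, m k v = f (x k) + ⟪g k, v⟫
      + (1 / 2) * ⟪(Matrix.toEuclideanCLM (𝕜 := ℝ) (B k)) v, v⟫)
    (hyp : ∀ k, (∀ j ≤ k,
        ¬(‖gradient f (x j)‖ ≤ εg ∧ -εH ≤ lambdaMin (hessian f (x j)))) →
      (‖g k - gradient f (x k)‖ ≤ 2 * Lg * D0 * (Δ k / Δmax) ^ 2) ∧
      (specNorm (B k) ≤ Lg) ∧
      (4 * εg / 5 < ‖g k‖ ∨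
        (4 * εH / 5 < -lambdaMin (B k) ∧
          specNorm (B k - hessian f (x k)) ≤ 2 * Lg * (Δ k / Δmax))) ∧
      (‖d k‖ ≤ Δ k) ∧
      (m k 0 - m k (d k)
        ≥ max (1 / 2 * ‖g k‖ * min (Δ k) (‖g k‖ / Lg)) (-lambdaMin (B k) * Δ k ^ 2)) ∧
      ((α ≤ (f (x k) - f (x k + d k)) / (m k 0 - m k (d k)) →
          x (k + 1) = x k + d k ∧ Δ (k + 1) = min (2 * Δ k) Δmax) ∧
        ((f (x k) - f (x k + d k)) / (m k 0 - m k (d k)) < α →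
          x (k + 1) = x k ∧ Δ (k + 1) = Δ k / 2))) :
    {k : ℕ | ‖gradient f (x k)‖ ≤ εg ∧ -εH ≤ lambdaMin (hessian f (x k))}.Nonempty ∧
    ((sInf {k : ℕ | ‖gradient f (x k)‖ ≤ εg ∧
        -εH ≤ lambdaMin (hessian f (x k))} : ℕ) : ℝ) ≤
      (5 / α) * (f (x 0) - flow) * max (εg⁻¹ * Δmin⁻¹) (εH⁻¹ * (Δmin ^ 2)⁻¹) +
      Real.logb 2 (Δmax / Δmin) + 1 :=
  stmt_17_general f Lg LH flow hLg hLH hf hlipg hlipH hlow α εg εH D0 Δmax hα0 hα1 hεg hεH hD0 Δbar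
    Δmin hΔbar x d g Δ B hΔ0pos hΔ0max hΔmin m hm hyp
end
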